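/- arXiv:math/0505182 — 5 statements merged into one kernel-verified Lean document; each statement's English description precedes it below -/
import Mathlib

section
/- Let S = OnePoint ℂ (the Riemann sphere) and let Q be the quotient topological space of S × Fin 2 by the equivalence relation generated by identifying (0,0) with (0,1) (two Riemann spheres glued at one node). Then the map S × Fin 2 → S × Fin 2 given by (z,i) ↦ (z,0) descends to a well-defined continuous map F : Q → Q, and F is not an open map. -/
open OnePoint

/-- The relation on `(OnePoint ℂ) × Fin 2` identifying `(0,0)` with `(0,1)`;
the quotient `Quot r` (two Riemann spheres glued at one node) is taken with respect to
the equivalence relation generated by `r`. -/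
def nodeRel : OnePoint ℂ × Fin 2 → OnePoint ℂ × Fin 2 → Prop :=
  fun a b => a = (((0 : ℂ) : OnePoint ℂ), 0) ∧ b = (((0 : ℂ) : OnePoint ℂ), 1)

/-!
Folding the second sphere onto the first sends the whole space onto the first sphere, whose
image in `Q` is not open: near the node, the second sphere meets it only in the node itself,
and a single point is not open in `ℂ`.
-/

lemma Quot.eq_of_mk_eq_mk_of_isolated {α : Type*} {r : α → α → Prop} {a b : α}
    (ha : ∀ c, ¬ r a c ∧ ¬ r c a) (h : Quot.mk r a = Quot.mk r b) : a = b := by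
  have key : ∀ x y, Relation.EqvGen r x y → (x = a ↔ y = a) := by
    intro x y hxy
    induction hxy with
    | rel x y hxy =>
      constructor
      · rintro rfl; exact absurd hxy (ha y).1
      · rintro rfl; exact absurd hxy (ha x).2
    | refl => rfl
    | symm _ _ _ ih => exact ih.symm
    | trans _ _ _ _ _ ih₁ ih₂ => exact ih₁.trans ih₂
  exact ((key a b (Quot.eqvGen_exact h)).mp rfl).symm

lemma nodeRel_isolated {a : OnePoint ℂ × Fin 2} (ha : a.1 ≠ ((0 : ℂ) : OnePoint ℂ)) :
    ∀ c, ¬ nodeRel a c ∧ ¬ nodeRel c a :=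
  fun _ => ⟨fun h => ha (congrArg Prod.fst h.1), fun h => ha (congrArg Prod.fst h.2)⟩

def nodeFold : Quot nodeRel → Quot nodeRel :=
  Quot.lift (fun a => Quot.mk nodeRel (a.1, 0)) (by rintro _ _ ⟨rfl, rfl⟩; rfl)

lemma continuous_nodeFold : Continuous nodeFold :=
  continuous_quot_lift _ (continuous_quot_mk.comp (continuous_fst.prodMk continuous_const))

lemma not_isOpen_range_nodeFold : ¬ IsOpen (Set.range nodeFold) := by
  intro hopen
  let secondSphere : ℂ → Quot nodeRel := fun z => Quot.mk nodeRel ((z : OnePoint ℂ), 1)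
  have hcont : Continuous secondSphere :=
    continuous_quot_mk.comp (OnePoint.continuous_coe.prodMk continuous_const)
  have hslice : secondSphere ⁻¹' Set.range nodeFold = {0} := by
    ext z
    constructor
    · rintro ⟨q, hq⟩
      obtain ⟨a, rfl⟩ := Quot.exists_rep q
      by_contra hz
      have hz' : ((z : OnePoint ℂ), (1 : Fin 2)).1 ≠ ((0 : ℂ) : OnePoint ℂ) :=
        fun h => hz (OnePoint.coe_injective h)
      exact one_ne_zero
        (congrArg Prod.snd (Quot.eq_of_mk_eq_mk_of_isolated (nodeRel_isolated hz') hq.symm))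
    · rintro rfl
      exact ⟨Quot.mk nodeRel (((0 : ℂ) : OnePoint ℂ), 0), Quot.sound ⟨rfl, rfl⟩⟩
  exact not_isOpen_singleton (0 : ℂ) (hslice ▸ hopen.preimage hcont)

/-- the map `(z,i) ↦ (z,0)` descends to a well-defined continuous map
`F : Q → Q` on the quotient `Q` of two Riemann spheres glued at a node, and `F` is
not an open map. -/
theorem double_cover_statement_2 :
    ∃ F : Quot nodeRel → Quot nodeRel, Continuous F ∧
      (∀ a : OnePoint ℂ × Fin 2, F (Quot.mk nodeRel a) = Quot.mk nodeRel (a.1, 0)) ∧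
      ¬ IsOpenMap F :=
  ⟨nodeFold, continuous_nodeFold, fun _ => rfl,
    fun hF => not_isOpen_range_nodeFold hF.isOpen_range⟩
end

section
/- X₁ and X₂ are homeomorphic topological spaces. -/
open OnePoint

/-- Identifications `i ∼ 2i` and `−i ∼ −2i` on the Riemann sphere `OnePoint ℂ`. -/
def relEx2₁ : OnePoint ℂ → OnePoint ℂ → Prop := fun a b =>
  (a = (Complex.I : OnePoint ℂ) ∧ b = ((2 * Complex.I : ℂ) : OnePoint ℂ)) ∨
  (a = ((-Complex.I : ℂ) : OnePoint ℂ) ∧ b = ((-(2 * Complex.I) : ℂ) : OnePoint ℂ))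

/-- Identifications `i ∼ −2i` and `−i ∼ 2i` on the Riemann sphere `OnePoint ℂ`. -/
def relEx2₂ : OnePoint ℂ → OnePoint ℂ → Prop := fun a b =>
  (a = (Complex.I : OnePoint ℂ) ∧ b = ((-(2 * Complex.I) : ℂ) : OnePoint ℂ)) ∨
  (a = ((-Complex.I : ℂ) : OnePoint ℂ) ∧ b = ((2 * Complex.I : ℂ) : OnePoint ℂ))

/-- The "twist" homeomorphism of the plane: rotate the circle of radius `r` by angle
`π (r - 1)`. It fixes `± i` and swaps `2i` with `-2i`. -/
noncomputable def twistFun : ℂ → ℂ := fun z =>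
  z * Complex.exp (Real.pi * ((‖z‖ : ℂ) - 1) * Complex.I)

/-- The inverse twist. -/
noncomputable def untwistFun : ℂ → ℂ := fun z =>
  z * Complex.exp (-(Real.pi * ((‖z‖ : ℂ) - 1) * Complex.I))

lemma abs_twistFun (z : ℂ) : ‖twistFun z‖ = ‖z‖ := by
  simp [twistFun, map_mul, Complex.norm_exp]

lemma abs_untwistFun (z : ℂ) : ‖untwistFun z‖ = ‖z‖ := by
  simp [untwistFun, map_mul, Complex.norm_exp]

lemma untwist_twist (z : ℂ) : untwistFun (twistFun z) = z := by
  unfold untwistFun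
  rw [abs_twistFun]
  unfold twistFun
  rw [mul_assoc, ← Complex.exp_add]
  simp

lemma twist_untwist (z : ℂ) : twistFun (untwistFun z) = z := by
  unfold twistFun
  rw [abs_untwistFun]
  unfold untwistFun
  rw [mul_assoc, ← Complex.exp_add]
  simp

lemma continuous_twistFun : Continuous twistFun := by
  unfold twistFun
  exact continuous_id.mul (Complex.continuous_exp.comp
    ((continuous_const.mul ((Complex.continuous_ofReal.comp continuous_norm).sub
      continuous_const)).mul continuous_const))

lemma continuous_untwistFun : Continuous untwistFun := by
  unfold untwistFun
  exact continuous_id.mul (Complex.continuous_exp.comp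
    ((continuous_const.mul ((Complex.continuous_ofReal.comp continuous_norm).sub
      continuous_const)).mul continuous_const).neg)

lemma twist_tendsto : Filter.Tendsto twistFun (Filter.cocompact ℂ) (Filter.cocompact ℂ) := by
  rw [← Metric.cobounded_eq_cocompact, ← comap_norm_atTop]
  rw [Filter.tendsto_comap_iff]
  have : (norm ∘ twistFun) = fun z : ℂ => ‖z‖ := by
    funext z
    simpa using abs_twistFun z
  rw [this]
  exact Filter.tendsto_comap

lemma untwist_tendsto : Filter.Tendsto untwistFun (Filter.cocompact ℂ) (Filter.cocompact ℂ) := by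
  rw [← Metric.cobounded_eq_cocompact, ← comap_norm_atTop]
  rw [Filter.tendsto_comap_iff]
  have : (norm ∘ untwistFun) = fun z : ℂ => ‖z‖ := by
    funext z
    simpa using abs_untwistFun z
  rw [this]
  exact Filter.tendsto_comap

lemma twist_I : twistFun Complex.I = Complex.I := by
  simp [twistFun]

lemma twist_neg_I : twistFun (-Complex.I) = -Complex.I := by
  simp [twistFun]

lemma twist_two_I : twistFun (2 * Complex.I) = -(2 * Complex.I) := by
  have h2 : ‖2 * Complex.I‖ = 2 := by
    simp
  rw [twistFun, h2]
  push_cast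
  have : ((Real.pi : ℂ) * ((2 : ℂ) - 1) * Complex.I) = Real.pi * Complex.I := by ring
  rw [this, Complex.exp_pi_mul_I]
  ring

lemma twist_neg_two_I : twistFun (-(2 * Complex.I)) = 2 * Complex.I := by
  have h2 : ‖-(2 * Complex.I)‖ = 2 := by
    simp
  rw [twistFun, h2]
  push_cast
  have : ((Real.pi : ℂ) * ((2 : ℂ) - 1) * Complex.I) = Real.pi * Complex.I := by ring
  rw [this, Complex.exp_pi_mul_I]
  ring

lemma untwist_I : untwistFun Complex.I = Complex.I := by
  conv_lhs => rw [← twist_I]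
  exact untwist_twist _

lemma untwist_neg_I : untwistFun (-Complex.I) = -Complex.I := by
  conv_lhs => rw [← twist_neg_I]
  exact untwist_twist _

lemma untwist_two_I : untwistFun (2 * Complex.I) = -(2 * Complex.I) := by
  conv_lhs => rw [← twist_neg_two_I]
  rw [untwist_twist]

lemma untwist_neg_two_I : untwistFun (-(2 * Complex.I)) = 2 * Complex.I := by
  conv_lhs => rw [← twist_two_I]
  rw [untwist_twist]

/-- The twist extended to the one point compactification. -/
noncomputable def Twist : OnePoint ℂ → OnePoint ℂ := OnePoint.map twistFun

noncomputable def Untwist : OnePoint ℂ → OnePoint ℂ := OnePoint.map untwistFun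

lemma continuous_Twist : Continuous Twist :=
  OnePoint.continuous_map continuous_twistFun
    (by rw [Filter.coclosedCompact_eq_cocompact]; exact twist_tendsto)

lemma continuous_Untwist : Continuous Untwist :=
  OnePoint.continuous_map continuous_untwistFun
    (by rw [Filter.coclosedCompact_eq_cocompact]; exact untwist_tendsto)

lemma Twist_rel : ∀ a b, relEx2₁ a b → relEx2₂ (Twist a) (Twist b) := by
  rintro a b (⟨rfl, rfl⟩ | ⟨rfl, rfl⟩)
  · left
    constructor
    · show ((twistFun Complex.I : ℂ) : OnePoint ℂ) = _
      rw [twist_I]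
    · show ((twistFun (2 * Complex.I) : ℂ) : OnePoint ℂ) = _
      rw [twist_two_I]
  · right
    constructor
    · show ((twistFun (-Complex.I) : ℂ) : OnePoint ℂ) = _
      rw [twist_neg_I]
    · show ((twistFun (-(2 * Complex.I)) : ℂ) : OnePoint ℂ) = _
      rw [twist_neg_two_I]

lemma Untwist_rel : ∀ a b, relEx2₂ a b → relEx2₁ (Untwist a) (Untwist b) := by
  rintro a b (⟨rfl, rfl⟩ | ⟨rfl, rfl⟩)
  · left
    constructor
    · show ((untwistFun Complex.I : ℂ) : OnePoint ℂ) = _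
      rw [untwist_I]
    · show ((untwistFun (-(2 * Complex.I)) : ℂ) : OnePoint ℂ) = _
      rw [untwist_neg_two_I]
  · right
    constructor
    · show ((untwistFun (-Complex.I) : ℂ) : OnePoint ℂ) = _
      rw [untwist_neg_I]
    · show ((untwistFun (2 * Complex.I) : ℂ) : OnePoint ℂ) = _
      rw [untwist_two_I]

lemma Untwist_Twist (a : OnePoint ℂ) : Untwist (Twist a) = a := by
  cases a with
  | infty => rfl
  | coe z => exact congrArg _ (untwist_twist z)

lemma Twist_Untwist (a : OnePoint ℂ) : Twist (Untwist a) = a := by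
  cases a with
  | infty => rfl
  | coe z => exact congrArg _ (twist_untwist z)

/-- the quotients `X₁ = Quot relEx2₁` and `X₂ = Quot relEx2₂` are
homeomorphic topological spaces. -/
theorem double_cover_statement_8 : Nonempty (Quot relEx2₁ ≃ₜ Quot relEx2₂) := by
  refine ⟨{
    toFun := Quot.map Twist Twist_rel
    invFun := Quot.map Untwist Untwist_rel
    left_inv := by
      rintro ⟨a⟩
      exact congrArg (Quot.mk _) (Untwist_Twist a)
    right_inv := by
      rintro ⟨a⟩
      exact congrArg (Quot.mk _) (Twist_Untwist a)
    continuous_toFun := continuous_quot_lift _ (continuous_quot_mk.comp continuous_Twist)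
    continuous_invFun := continuous_quot_lift _ (continuous_quot_mk.comp continuous_Untwist) }⟩
end

section
/- Complex conjugation, extended to S = OnePoint ℂ by fixing ∞, descends to well-defined continuous involutions σ₁ : X₁ → X₁ and σ₂ : X₂ → X₂, and for i = 1, 2 the fixed-point set of σᵢ equals the image in Xᵢ of ℝ ∪ {∞}. -/
open OnePoint

/-- Complex conjugation extended to the Riemann sphere `OnePoint ℂ`, fixing `∞`. -/
noncomputable def conjSphere : OnePoint ℂ → OnePoint ℂ := OnePoint.map (starRingEnd ℂ)

/-- The subset `ℝ ∪ {∞}` of the Riemann sphere `OnePoint ℂ`. -/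
def realCircle : Set (OnePoint ℂ) :=
  {x | (∃ t : ℝ, x = ((t : ℂ) : OnePoint ℂ)) ∨ x = ∞}

/-! Conjugation maps each identified pair onto the other one, so it preserves the relation and
descends to a continuous involution. A class is fixed by the induced map only if some point is
identified with its own conjugate; the two identified pairs are disjoint, so the classes are
`{z}` and the two pairs, and a pair is never fixed because it is sent to the other pair. Hence
the fixed classes are exactly those of the real points and `∞`. -/

namespace Relation

variable {α : Type*} {r : α → α → Prop}

theorem eqvGen_iff_of_overlapping_eq
    (hr : ∀ a b c d, r a b → r c d → (a = c ∨ a = d ∨ b = c ∨ b = d) → a = c ∧ b = d)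
    {a b : α} : EqvGen r a b ↔ a = b ∨ r a b ∨ r b a := by
  have hequiv : Equivalence fun a b => a = b ∨ r a b ∨ r b a := by
    refine ⟨fun a => Or.inl rfl, ?_, ?_⟩
    · rintro a b (rfl | h | h)
      exacts [Or.inl rfl, Or.inr (Or.inr h), Or.inr (Or.inl h)]
    · rintro a b c (rfl | hab | hba) (rfl | hbc | hcb)
      · exact Or.inl rfl
      · exact Or.inr (Or.inl hbc)
      · exact Or.inr (Or.inr hcb)
      · exact Or.inr (Or.inl hab)
      · obtain ⟨rfl, rfl⟩ := hr _ _ _ _ hab hbc (by simp)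
        exact Or.inl rfl
      · exact Or.inl (hr _ _ _ _ hab hcb (by simp)).1
      · exact Or.inr (Or.inr hba)
      · exact Or.inl (hr _ _ _ _ hba hbc (by simp)).2
      · obtain ⟨rfl, rfl⟩ := hr _ _ _ _ hba hcb (by simp)
        exact Or.inl rfl
  refine ⟨fun h => hequiv.eqvGen_iff.mp (h.mono fun a b hab => Or.inr (Or.inl hab)), ?_⟩
  rintro (rfl | h | h)
  exacts [EqvGen.refl a, EqvGen.rel _ _ h, EqvGen.symm _ _ (EqvGen.rel _ _ h)]

end Relation

section Quotient

variable {X : Type*} {r : X → X → Prop} {f : X → X}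

theorem Quot.map_comp_self_of_involutive (h : ∀ a b, r a b → r (f a) (f b))
    (hf : Function.Involutive f) : Quot.map f h ∘ Quot.map f h = id := by
  funext x
  induction x using Quot.ind with
  | _ a => exact congrArg (Quot.mk r) (hf a)

theorem Quot.setOf_map_eq_self (h : ∀ a b, r a b → r (f a) (f b))
    (hfix : ∀ a, Relation.EqvGen r (f a) a → f a = a) :
    {x | Quot.map f h x = x} = Quot.mk r '' Function.fixedPoints f := by
  ext x
  induction x using Quot.ind with
  | _ a =>
    refine ⟨fun ha => ⟨a, hfix a (Quot.eqvGen_exact ha), rfl⟩, ?_⟩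
    rintro ⟨b, hb, hba⟩
    rw [← hba]
    exact congrArg (Quot.mk r) hb

end Quotient

-- `relEx2₁` and `relEx2₂` unfold to instances of `pairsRel`.
def pairsRel {α : Type*} (p q p' q' : α) (a b : α) : Prop :=
  (a = p ∧ b = q) ∨ (a = p' ∧ b = q')

section pairsRel

variable {α : Type*} {p q p' q' : α} {f : α → α}

theorem pairsRel_overlapping_eq (hpp' : p ≠ p') (hpq' : p ≠ q') (hqp' : q ≠ p') (hqq' : q ≠ q')
    (a b c d : α) (hab : pairsRel p q p' q' a b) (hcd : pairsRel p q p' q' c d)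
    (hoverlap : a = c ∨ a = d ∨ b = c ∨ b = d) : a = c ∧ b = d := by
  rcases hab with ⟨rfl, rfl⟩ | ⟨rfl, rfl⟩ <;> rcases hcd with ⟨rfl, rfl⟩ | ⟨rfl, rfl⟩ <;> tauto

theorem pairsRel_apply_apply (hf : Function.Involutive f) (hp : f p = p') (hq : f q = q')
    (a b : α) : pairsRel p q p' q' a b → pairsRel p q p' q' (f a) (f b) := by
  rintro (⟨rfl, rfl⟩ | ⟨rfl, rfl⟩)
  · exact Or.inr ⟨hp, hq⟩
  · exact Or.inl ⟨hp ▸ hf p, hq ▸ hf q⟩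

theorem not_pairsRel_apply (hf : Function.Involutive f) (hp : f p = p')
    (hpq' : p ≠ q') (hqp' : q ≠ p') (a : α) : ¬ pairsRel p q p' q' a (f a) := by
  rintro (⟨rfl, hfa⟩ | ⟨rfl, hfa⟩)
  · exact hqp' (hfa.symm.trans hp)
  · exact hpq' ((hp ▸ hf p).symm.trans hfa)

theorem exists_continuous_involution_quot_pairsRel [TopologicalSpace α] (hcont : Continuous f)
    (hf : Function.Involutive f) (hp : f p = p') (hq : f q = q')
    (hpp' : p ≠ p') (hpq' : p ≠ q') (hqp' : q ≠ p') (hqq' : q ≠ q') :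
    ∃ σ : Quot (pairsRel p q p' q') → Quot (pairsRel p q p' q'),
      Continuous σ ∧ (∀ a, σ (Quot.mk _ a) = Quot.mk _ (f a)) ∧ σ ∘ σ = id ∧
      {x | σ x = x} = Quot.mk _ '' Function.fixedPoints f := by
  have hmap := pairsRel_apply_apply hf hp hq
  have hfix (a : α) (ha : Relation.EqvGen (pairsRel p q p' q') (f a) a) : f a = a := by
    rw [Relation.eqvGen_iff_of_overlapping_eq (pairsRel_overlapping_eq hpp' hpq' hqp' hqq')] at ha
    rcases ha with ha | ha | ha
    · exact ha
    · have ha' := hmap _ _ ha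
      rw [hf a] at ha'
      exact absurd ha' (not_pairsRel_apply hf hp hpq' hqp' a)
    · exact absurd ha (not_pairsRel_apply hf hp hpq' hqp' a)
  exact ⟨Quot.map f hmap, continuous_quot_map hmap hcont, fun _ => rfl,
    Quot.map_comp_self_of_involutive hmap hf, Quot.setOf_map_eq_self hmap hfix⟩

end pairsRel

theorem continuous_conjSphere : Continuous conjSphere :=
  Complex.conjCLE.toHomeomorph.onePointCongr.continuous

theorem conjSphere_involutive : Function.Involutive conjSphere := by
  intro x
  induction x using OnePoint.rec with
  | infty => rfl
  | coe z => exact congrArg ((↑) : ℂ → OnePoint ℂ) (Complex.conj_conj z)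

theorem conjSphere_coe (z : ℂ) : conjSphere z = (starRingEnd ℂ z : OnePoint ℂ) := rfl

theorem fixedPoints_conjSphere : Function.fixedPoints conjSphere = realCircle := by
  ext x
  induction x using OnePoint.rec with
  | infty => exact ⟨fun _ => Or.inr rfl, fun _ => rfl⟩
  | coe z =>
    simp only [Function.mem_fixedPoints, Function.IsFixedPt, conjSphere_coe, OnePoint.coe_eq_coe,
      Complex.conj_eq_iff_real, realCircle, Set.mem_ofPred_eq, OnePoint.coe_ne_infty, or_false]

/-- conjugation descends to well-defined continuous involutions
`σ₁ : X₁ → X₁` and `σ₂ : X₂ → X₂`, and for `i = 1, 2` the fixed-point set of `σᵢ` is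
the image in `Xᵢ` of `ℝ ∪ {∞}`. -/
theorem double_cover_statement_9 :
    ∃ (σ₁ : Quot relEx2₁ → Quot relEx2₁) (σ₂ : Quot relEx2₂ → Quot relEx2₂),
      Continuous σ₁ ∧ Continuous σ₂ ∧
      (∀ a : OnePoint ℂ, σ₁ (Quot.mk relEx2₁ a) = Quot.mk relEx2₁ (conjSphere a)) ∧
      (∀ a : OnePoint ℂ, σ₂ (Quot.mk relEx2₂ a) = Quot.mk relEx2₂ (conjSphere a)) ∧
      σ₁ ∘ σ₁ = id ∧ σ₂ ∘ σ₂ = id ∧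
      {x : Quot relEx2₁ | σ₁ x = x} = Quot.mk relEx2₁ '' realCircle ∧
      {x : Quot relEx2₂ | σ₂ x = x} = Quot.mk relEx2₂ '' realCircle := by
  have hI : conjSphere (Complex.I : OnePoint ℂ) = ((-Complex.I : ℂ) : OnePoint ℂ) := by
    simp [conjSphere_coe]
  have h2I : conjSphere ((2 * Complex.I : ℂ) : OnePoint ℂ) =
      ((-(2 * Complex.I) : ℂ) : OnePoint ℂ) := by
    simp [conjSphere_coe, map_ofNat]
  have hm2I : conjSphere ((-(2 * Complex.I) : ℂ) : OnePoint ℂ) =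
      ((2 * Complex.I : ℂ) : OnePoint ℂ) := by
    rw [← h2I, conjSphere_involutive]
  have hne {z w : ℂ} (h : z.im ≠ w.im) : (z : OnePoint ℂ) ≠ w :=
    OnePoint.coe_injective.ne fun hzw => h (congrArg Complex.im hzw)
  obtain ⟨σ₁, hcont₁, hmk₁, hinv₁, hfix₁⟩ := exists_continuous_involution_quot_pairsRel
    continuous_conjSphere conjSphere_involutive hI h2I
    (hne (by norm_num)) (hne (by norm_num)) (hne (by norm_num)) (hne (by norm_num))
  obtain ⟨σ₂, hcont₂, hmk₂, hinv₂, hfix₂⟩ := exists_continuous_involution_quot_pairsRel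
    continuous_conjSphere conjSphere_involutive hI hm2I
    (hne (by norm_num)) (hne (by norm_num)) (hne (by norm_num)) (hne (by norm_num))
  rw [fixedPoints_conjSphere] at hfix₁ hfix₂
  exact ⟨σ₁, σ₂, hcont₁, hcont₂, hmk₁, hmk₂, hinv₁, hinv₂, hfix₁, hfix₂⟩
end

section
/- The complement in X₁ of the image of ℝ ∪ {∞} is not connected: it is the union of the two disjoint nonempty open sets given by the images of the open upper half-plane and the open lower half-plane. -/
open OnePoint

/-- The open upper half-plane, viewed inside the Riemann sphere. -/
def upperHalfSphere : Set (OnePoint ℂ) := {x | ∃ z : ℂ, x = (z : OnePoint ℂ) ∧ 0 < z.im}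

/-- The open lower half-plane, viewed inside the Riemann sphere. -/
def lowerHalfSphere : Set (OnePoint ℂ) := {x | ∃ z : ℂ, x = (z : OnePoint ℂ) ∧ z.im < 0}

/-! The sign of the imaginary part, extended by `0` at `∞`, is invariant under the two
identifications, so it descends to a map `X₁ → SignType`. The images of `ℝ ∪ {∞}` and of the
two half-planes are its three fibres; the fibres over `±1` are open, because their preimages in
the sphere are the (open) half-planes and `X₁` carries the quotient topology. -/

theorem Quot.image_preimage_eq_preimage_lift {X Y : Type*} {r : X → X → Prop} (f : X → Y)
    (hf : ∀ a b, r a b → f a = f b) (s : Set Y) :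
    Quot.mk r '' (f ⁻¹' s) = Quot.lift f hf ⁻¹' s :=
  Set.image_preimage_eq (Quot.lift f hf ⁻¹' s) Quot.mk_surjective

theorem not_isPreconnected_of_eq_union {X : Type*} [TopologicalSpace X] {s u v : Set X}
    (hu : IsOpen u) (hv : IsOpen v) (hs : s = u ∪ v) (huv : Disjoint u v)
    (hu' : u.Nonempty) (hv' : v.Nonempty) : ¬ IsPreconnected s := by
  subst hs
  intro h
  obtain ⟨x, -, hxu, hxv⟩ := h u v hu hv subset_rfl
    (hu'.mono fun x hx => ⟨Or.inl hx, hx⟩) (hv'.mono fun x hx => ⟨Or.inr hx, hx⟩)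
  exact huv.notMem_of_mem_left hxu hxv

noncomputable def signIm (x : OnePoint ℂ) : SignType := x.elim 0 fun z => SignType.sign z.im

theorem signIm_eq_of_relEx2₁ (a b : OnePoint ℂ) (h : relEx2₁ a b) : signIm a = signIm b := by
  rcases h with ⟨rfl, rfl⟩ | ⟨rfl, rfl⟩ <;> simp [signIm]

noncomputable def signImQuot : Quot relEx2₁ → SignType := Quot.lift signIm signIm_eq_of_relEx2₁

theorem signIm_preimage_zero : signIm ⁻¹' {0} = realCircle := by
  ext x
  cases x with
  | infty => simp [signIm, realCircle]
  | coe z =>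
    simpa [signIm, realCircle] using Complex.conj_eq_iff_im.symm.trans Complex.conj_eq_iff_real

theorem signIm_preimage_one : signIm ⁻¹' {1} = upperHalfSphere := by
  ext x
  cases x <;> simp [signIm, upperHalfSphere, sign_eq_one_iff]

theorem signIm_preimage_neg_one : signIm ⁻¹' {-1} = lowerHalfSphere := by
  ext x
  cases x <;> simp [signIm, lowerHalfSphere, sign_eq_neg_one_iff]

theorem mk_image_signIm_preimage (s : Set SignType) :
    Quot.mk relEx2₁ '' (signIm ⁻¹' s) = signImQuot ⁻¹' s :=
  Quot.image_preimage_eq_preimage_lift _ _ s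

theorem isOpen_signImQuot_preimage {s : Set SignType} (h : IsOpen (signIm ⁻¹' s)) :
    IsOpen (signImQuot ⁻¹' s) :=
  isQuotientMap_quot_mk.isOpen_preimage.mp h

theorem isOpen_upperHalfSphere : IsOpen upperHalfSphere := by
  have : upperHalfSphere = ((↑) : ℂ → OnePoint ℂ) '' {z | 0 < z.im} := by
    ext x; cases x <;> simp [upperHalfSphere]
  exact this ▸ isOpen_image_coe.2 (isOpen_lt continuous_const Complex.continuous_im)

theorem isOpen_lowerHalfSphere : IsOpen lowerHalfSphere := by
  have : lowerHalfSphere = ((↑) : ℂ → OnePoint ℂ) '' {z | z.im < 0} := by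
    ext x; cases x <;> simp [lowerHalfSphere]
  exact this ▸ isOpen_image_coe.2 (isOpen_lt Complex.continuous_im continuous_const)

/-- the complement in `X₁ = Quot relEx2₁` of the image of `ℝ ∪ {∞}` is not
connected: it is the union of the two disjoint nonempty open sets given by the images of
the open upper and lower half-planes. -/
theorem double_cover_statement_10 :
    ¬ IsConnected ((Quot.mk relEx2₁ '' realCircle)ᶜ) ∧
    (Quot.mk relEx2₁ '' realCircle)ᶜ =
      Quot.mk relEx2₁ '' upperHalfSphere ∪ Quot.mk relEx2₁ '' lowerHalfSphere ∧
    Disjoint (Quot.mk relEx2₁ '' upperHalfSphere) (Quot.mk relEx2₁ '' lowerHalfSphere) ∧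
    (Quot.mk relEx2₁ '' upperHalfSphere).Nonempty ∧
    (Quot.mk relEx2₁ '' lowerHalfSphere).Nonempty ∧
    IsOpen (Quot.mk relEx2₁ '' upperHalfSphere) ∧
    IsOpen (Quot.mk relEx2₁ '' lowerHalfSphere) := by
  simp only [← signIm_preimage_zero, ← signIm_preimage_one, ← signIm_preimage_neg_one,
    mk_image_signIm_preimage]
  have hcover : (signImQuot ⁻¹' {0})ᶜ = signImQuot ⁻¹' {1} ∪ signImQuot ⁻¹' {-1} := by
    rw [← Set.preimage_compl, ← Set.preimage_union]
    congr
    ext a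
    cases a <;> simp
  have hdisj : Disjoint (signImQuot ⁻¹' {1}) (signImQuot ⁻¹' {-1}) :=
    Disjoint.preimage _ (by simp)
  have hupper : IsOpen (signImQuot ⁻¹' {1}) :=
    isOpen_signImQuot_preimage (signIm_preimage_one ▸ isOpen_upperHalfSphere)
  have hlower : IsOpen (signImQuot ⁻¹' {-1}) :=
    isOpen_signImQuot_preimage (signIm_preimage_neg_one ▸ isOpen_lowerHalfSphere)
  have hI : (signImQuot ⁻¹' {1}).Nonempty :=
    ⟨Quot.mk _ (Complex.I : OnePoint ℂ), by simp [signImQuot, signIm]⟩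
  have hnegI : (signImQuot ⁻¹' {-1}).Nonempty :=
    ⟨Quot.mk _ ((-Complex.I : ℂ) : OnePoint ℂ), by simp [signImQuot, signIm]⟩
  refine ⟨fun h => ?_, hcover, hdisj, hI, hnegI, hupper, hlower⟩
  exact not_isPreconnected_of_eq_union hupper hlower hcover hdisj hI hnegI h.isPreconnected
end

section
/- There is no homeomorphism h : X₁ → X₂ satisfying h ∘ σ₁ = σ₂ ∘ h. -/
open OnePoint

/-!
A homeomorphism intertwining `σ₁` and `σ₂` maps the points moved by `σ₁` onto those moved by
`σ₂`, so it suffices to show that one of these sets is connected and the other is not. Both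
identifications are disjoint pairs, neither swapped by conjugation, so in both surfaces the
moved points are exactly the images of `ℂ ∖ ℝ`. In `X₁` each identification stays inside one
half plane, so the images of the two half planes are disjoint open sets and the moved set is
disconnected. In `X₂` the node `i ∼ -2i` joins the two half planes, so the moved set is
connected.
-/

open Function Set

section Quotient

variable {α : Type*} {r : α → α → Prop}

theorem Relation.eqvGen_iff_of_matching
    (hfun : ∀ {a b c}, r a b → r a c → b = c) (hinj : ∀ {a b c}, r a c → r b c → a = b)
    (hchain : ∀ {a b c}, r a b → ¬ r b c) {a b : α} :
    Relation.EqvGen r a b ↔ a = b ∨ r a b ∨ r b a := by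
  have hequiv : Equivalence fun a b => a = b ∨ r a b ∨ r b a := by
    refine ⟨fun _ => .inl rfl, fun h => by tauto, fun hab hbc => ?_⟩
    rcases hab with rfl | hab | hba
    · exact hbc
    · rcases hbc with rfl | hbc | hcb
      · exact .inr (.inl hab)
      · exact (hchain hab hbc).elim
      · exact .inl (hinj hab hcb)
    · rcases hbc with rfl | hbc | hcb
      · exact .inr (.inr hba)
      · exact .inl (hfun hba hbc)
      · exact (hchain hcb hba).elim
  refine ⟨fun h => ?_, fun h => ?_⟩
  · exact hequiv.eqvGen_iff.mp (h.mono fun _ _ hr => .inr (.inl hr))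
  · rcases h with rfl | h | h
    exacts [.refl _, .rel _ _ h, .symm _ _ (.rel _ _ h)]

theorem Quot.mk_apply_eq_mk_iff {f : α → α}
    (hr : ∀ {a b}, Relation.EqvGen r a b ↔ a = b ∨ r a b ∨ r b a)
    (hf : ∀ a, ¬ r a (f a) ∧ ¬ r (f a) a) (a : α) :
    Quot.mk r (f a) = Quot.mk r a ↔ f a = a := by
  rw [Quot.eq, hr]
  have := hf a
  tauto

theorem Quot.setOf_apply_ne_eq_image {σ : Quot r → Quot r} {f : α → α}
    (hσ : ∀ a, σ (Quot.mk r a) = Quot.mk r (f a))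
    (hfix : ∀ a, Quot.mk r (f a) = Quot.mk r a ↔ f a = a) :
    {x | σ x ≠ x} = Quot.mk r '' {a | f a ≠ a} := by
  ext x
  induction x using Quot.ind with | _ a => ?_
  refine ⟨fun h => ⟨a, ?_, rfl⟩, ?_⟩
  · rwa [mem_ofPred_eq, Ne, ← hfix, ← hσ]
  · rintro ⟨b, hb, hba⟩
    rwa [mem_ofPred_eq, ← hba, hσ, Ne, hfix]

theorem Quot.preimage_image_mk_of_saturated {s : Set α}
    (hs : ∀ a b, r a b → (a ∈ s ↔ b ∈ s)) :
    Quot.mk r ⁻¹' (Quot.mk r '' s) = s := by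
  refine Subset.antisymm (fun a ⟨b, hb, hba⟩ => ?_) (subset_preimage_image _ _)
  have hmem : ∀ {a b}, Relation.EqvGen r a b → (a ∈ s ↔ b ∈ s) := by
    intro a b h
    induction h with
    | rel _ _ h => exact hs _ _ h
    | refl => rfl
    | symm _ _ _ ih => exact ih.symm
    | trans _ _ _ _ _ ih₁ ih₂ => exact ih₁.trans ih₂
  exact (hmem (Quot.eqvGen_exact hba)).mp hb

theorem Quot.isOpen_image_mk_of_saturated [TopologicalSpace α] {s : Set α} (hs_open : IsOpen s)
    (hs : ∀ a b, r a b → (a ∈ s ↔ b ∈ s)) : IsOpen (Quot.mk r '' s) := by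
  rwa [← isQuotientMap_quot_mk.isOpen_preimage, Quot.preimage_image_mk_of_saturated hs]

theorem Quot.disjoint_image_mk_of_saturated {s t : Set α} (hst : Disjoint s t)
    (hs : ∀ a b, r a b → (a ∈ s ↔ b ∈ s)) :
    Disjoint (Quot.mk r '' s) (Quot.mk r '' t) := by
  rw [disjoint_left]
  rintro _ hx ⟨b, hb, rfl⟩
  have hbs : b ∈ Quot.mk r ⁻¹' (Quot.mk r '' s) := hx
  rw [Quot.preimage_image_mk_of_saturated hs] at hbs
  exact hst.notMem_of_mem_left hbs hb

end Quotient

theorem Function.Semiconj.preimage_setOf_apply_ne {α β : Type*} {h : α → β} {σ : α → α}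
    {τ : β → β} (hc : Semiconj h σ τ) (hinj : Injective h) :
    h ⁻¹' {y | τ y ≠ y} = {x | σ x ≠ x} := by
  ext x
  simp only [mem_preimage, mem_ofPred_eq, ← hc x, hinj.ne_iff]

theorem not_isPreconnected_union {X : Type*} [TopologicalSpace X] {u v : Set X}
    (hu : IsOpen u) (hv : IsOpen v) (huv : Disjoint u v) (hu_ne : u.Nonempty)
    (hv_ne : v.Nonempty) : ¬ IsPreconnected (u ∪ v) := by
  intro h
  obtain ⟨x, hxu⟩ := hu_ne
  obtain ⟨y, hyv⟩ := hv_ne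
  have hsub := h.subset_left_of_subset_union hu hv huv subset_rfl ⟨x, .inl hxu, hxu⟩
  exact huv.notMem_of_mem_left (hsub (.inr hyv)) hyv

theorem setOf_conjSphere_ne :
    {a | conjSphere a ≠ a} = ((↑) : ℂ → OnePoint ℂ) '' {z | z.im ≠ 0} := by
  ext a
  induction a using OnePoint.rec with
  | infty => simp [conjSphere]
  | coe z => simp [conjSphere, Complex.conj_eq_iff_im]

theorem setOf_im_ne_zero : {z : ℂ | z.im ≠ 0} = {z | 0 < z.im} ∪ {z | z.im < 0} := by
  ext z
  exact ne_iff_lt_or_gt.trans or_comm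

theorem eqvGen_relEx2₁_iff {a b : OnePoint ℂ} :
    Relation.EqvGen relEx2₁ a b ↔ a = b ∨ relEx2₁ a b ∨ relEx2₁ b a := by
  refine Relation.eqvGen_iff_of_matching ?_ ?_ ?_ <;> intro a b c h₁ h₂ <;>
    rcases h₁ with ⟨rfl, rfl⟩ | ⟨rfl, rfl⟩ <;> rcases h₂ with ⟨h, h'⟩ | ⟨h, h'⟩ <;>
    subst_vars <;> norm_num [Complex.ext_iff] at *

theorem eqvGen_relEx2₂_iff {a b : OnePoint ℂ} :
    Relation.EqvGen relEx2₂ a b ↔ a = b ∨ relEx2₂ a b ∨ relEx2₂ b a := by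
  refine Relation.eqvGen_iff_of_matching ?_ ?_ ?_ <;> intro a b c h₁ h₂ <;>
    rcases h₁ with ⟨rfl, rfl⟩ | ⟨rfl, rfl⟩ <;> rcases h₂ with ⟨h, h'⟩ | ⟨h, h'⟩ <;>
    subst_vars <;> norm_num [Complex.ext_iff] at *

theorem not_relEx2₁_conjSphere (a : OnePoint ℂ) :
    ¬ relEx2₁ a (conjSphere a) ∧ ¬ relEx2₁ (conjSphere a) a := by
  constructor
  · rintro (⟨rfl, h⟩ | ⟨rfl, h⟩) <;> norm_num [conjSphere, Complex.ext_iff] at h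
  · rintro (⟨h, rfl⟩ | ⟨h, rfl⟩) <;> norm_num [conjSphere, Complex.ext_iff] at h

theorem not_relEx2₂_conjSphere (a : OnePoint ℂ) :
    ¬ relEx2₂ a (conjSphere a) ∧ ¬ relEx2₂ (conjSphere a) a := by
  constructor
  · rintro (⟨rfl, h⟩ | ⟨rfl, h⟩) <;> norm_num [conjSphere, Complex.ext_iff] at h
  · rintro (⟨h, rfl⟩ | ⟨h, rfl⟩) <;> norm_num [conjSphere, Complex.ext_iff] at h

theorem setOf_apply_ne_eq_image_nonreal {r : OnePoint ℂ → OnePoint ℂ → Prop}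
    (hr : ∀ {a b}, Relation.EqvGen r a b ↔ a = b ∨ r a b ∨ r b a)
    (hconj : ∀ a, ¬ r a (conjSphere a) ∧ ¬ r (conjSphere a) a) {σ : Quot r → Quot r}
    (hσ : ∀ a, σ (Quot.mk r a) = Quot.mk r (conjSphere a)) :
    {x | σ x ≠ x} = Quot.mk r '' ((↑) '' {z : ℂ | z.im ≠ 0}) := by
  rw [Quot.setOf_apply_ne_eq_image hσ (Quot.mk_apply_eq_mk_iff hr hconj), setOf_conjSphere_ne]

theorem relEx2₁_saturated_image_coe {s : Set ℂ} (hI : Complex.I ∈ s ↔ 2 * Complex.I ∈ s)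
    (hnegI : -Complex.I ∈ s ↔ -(2 * Complex.I) ∈ s) (a b : OnePoint ℂ) (hab : relEx2₁ a b) :
    a ∈ ((↑) '' s : Set (OnePoint ℂ)) ↔ b ∈ (↑) '' s := by
  rcases hab with ⟨rfl, rfl⟩ | ⟨rfl, rfl⟩ <;> simpa [OnePoint.coe_injective.mem_set_image]

theorem not_isPreconnected_image_nonreal₁ :
    ¬ IsPreconnected (Quot.mk relEx2₁ '' ((↑) '' {z : ℂ | z.im ≠ 0})) := by
  have hdisj : Disjoint {z : ℂ | 0 < z.im} {z | z.im < 0} :=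
    disjoint_left.mpr fun z (hz : 0 < z.im) => (lt_asymm hz : ¬ z.im < 0)
  have hsat :=
    relEx2₁_saturated_image_coe (s := {z : ℂ | 0 < z.im}) (by norm_num) (by norm_num)
  rw [setOf_im_ne_zero, image_union, image_union]
  refine not_isPreconnected_union ?_ ?_ ?_ ?_ ?_
  · exact Quot.isOpen_image_mk_of_saturated
      (OnePoint.isOpenMap_coe _ (isOpen_lt continuous_const Complex.continuous_im)) hsat
  · exact Quot.isOpen_image_mk_of_saturated
      (OnePoint.isOpenMap_coe _ (isOpen_lt Complex.continuous_im continuous_const))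
      (relEx2₁_saturated_image_coe (by norm_num) (by norm_num))
  · exact Quot.disjoint_image_mk_of_saturated
      (disjoint_image_of_injective OnePoint.coe_injective hdisj) hsat
  · exact ((nonempty_of_mem (show Complex.I ∈ {z : ℂ | 0 < z.im} by simp)).image _).image _
  · exact ((nonempty_of_mem (show -Complex.I ∈ {z : ℂ | z.im < 0} by simp)).image _).image _

theorem isPreconnected_image_nonreal₂ :
    IsPreconnected (Quot.mk relEx2₂ '' ((↑) '' {z : ℂ | z.im ≠ 0})) := by
  have hπ : Continuous fun z : ℂ => Quot.mk relEx2₂ (z : OnePoint ℂ) :=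
    continuous_quot_mk.comp OnePoint.continuous_coe
  have hnode : Quot.mk relEx2₂ ((-(2 * Complex.I) : ℂ) : OnePoint ℂ) =
      Quot.mk relEx2₂ (Complex.I : OnePoint ℂ) :=
    (Quot.sound (r := relEx2₂) (Or.inl ⟨rfl, rfl⟩)).symm
  rw [image_image, setOf_im_ne_zero, image_union]
  exact IsPreconnected.union _ ⟨Complex.I, by simp, rfl⟩ ⟨-(2 * Complex.I), by simp, hnode⟩
    ((convex_halfSpace_im_gt 0).isPreconnected.image _ hπ.continuousOn)
    ((convex_halfSpace_im_lt 0).isPreconnected.image _ hπ.continuousOn)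

/-- if `σ₁`, `σ₂` are the involutions of `X₁ = Quot relEx2₁`,
`X₂ = Quot relEx2₂` induced by conjugation, then there is no homeomorphism
`h : X₁ → X₂` with `h ∘ σ₁ = σ₂ ∘ h`. -/
theorem double_cover_statement_12
    (σ₁ : Quot relEx2₁ → Quot relEx2₁) (σ₂ : Quot relEx2₂ → Quot relEx2₂)
    (hσ₁ : ∀ a : OnePoint ℂ, σ₁ (Quot.mk relEx2₁ a) = Quot.mk relEx2₁ (conjSphere a))
    (hσ₂ : ∀ a : OnePoint ℂ, σ₂ (Quot.mk relEx2₂ a) = Quot.mk relEx2₂ (conjSphere a)) :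
    ¬ ∃ h : Quot relEx2₁ ≃ₜ Quot relEx2₂, ∀ x : Quot relEx2₁, h (σ₁ x) = σ₂ (h x) := by
  rintro ⟨h, hc⟩
  have hpre := Semiconj.preimage_setOf_apply_ne (h := h) hc h.injective
  rw [setOf_apply_ne_eq_image_nonreal eqvGen_relEx2₁_iff not_relEx2₁_conjSphere hσ₁,
    setOf_apply_ne_eq_image_nonreal eqvGen_relEx2₂_iff not_relEx2₂_conjSphere hσ₂] at hpre
  exact not_isPreconnected_image_nonreal₁
    (hpre ▸ h.isPreconnected_preimage.mpr isPreconnected_image_nonreal₂)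
end
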